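/- Let x, y be nonzero complex numbers with x² ≠ 1 and let ν ≥ 2 be an integer. Then (x/y)^ν · [ (1 + x²/y²)·A_{ν−1,ν} − (x/y)·A_{ν,ν} − (x/y)·A_{ν−2,ν} ] = −xy/(1 − x²). -/

import Mathlib

/-!
With `r = y/x`, the three terms of the general formula for `A_{i,ν}` satisfy, each on its own,
the three-term recurrence `(1 + x²/y²) A_{i+1} = (x/y) (A_i + A_{i+2})`; for the sum this uses
`∑_{c>i} r^{2c} = r^{2(i+1)} + ∑_{c>i+1} r^{2c}`. The general formula vanishes at `i = ν`, so the
bracket equals `−(x/y) A_{ν,ν}`, and `(x/y)^{ν+1} A_{ν,ν} = xy/(1 − x²)`.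
-/

/-- The coefficient `A_{i,ν} = −y²(y/x)^i − (1−x²)(x/y)^i ∑_{c=i+1}^ν (y/x)^{2c}
  + (y^{2(ν+1)}/x^{2ν})(x/y)^i` (for `0 ≤ i ≤ ν−1`). -/
noncomputable def Acoeff (x y : ℂ) (ν i : ℕ) : ℂ :=
  -y ^ 2 * (y / x) ^ i
    - (1 - x ^ 2) * (x / y) ^ i * (∑ c ∈ Finset.Icc (i + 1) ν, (y / x) ^ (2 * c))
    + (y ^ (2 * (ν + 1)) / x ^ (2 * ν)) * (x / y) ^ i

/-- The diagonal coefficient `A_{ν,ν} = (y²/(1−x²))(y/x)^ν`. -/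
noncomputable def AcoeffDiag (x y : ℂ) (ν : ℕ) : ℂ :=
  (y ^ 2 / (1 - x ^ 2)) * (y / x) ^ ν

open Finset

theorem Finset.sum_Icc_eq_add_sum_Icc_succ {M : Type*} [AddCommMonoid M] {a b : ℕ} (h : a ≤ b)
    (f : ℕ → M) : ∑ c ∈ Icc a b, f c = f a + ∑ c ∈ Icc (a + 1) b, f c := by
  rw [Finset.Icc_add_one_left_eq_Ioc, add_sum_Ioc_eq_sum_Icc h]

variable {x y : ℂ}

theorem Acoeff_eq_ratio_pow (ν i : ℕ) : Acoeff x y ν i =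
    -y ^ 2 * (y / x) ^ i - (1 - x ^ 2) * ((y / x) ^ i)⁻¹ * ∑ c ∈ Icc (i + 1) ν, (y / x) ^ (2 * c)
      + y ^ 2 * (y / x) ^ (2 * ν) * ((y / x) ^ i)⁻¹ := by
  rw [Acoeff, ← inv_pow, inv_div, div_pow, div_pow, mul_add, pow_add, mul_div_assoc]
  ring

theorem Acoeff_self (hx : x ≠ 0) (hy : y ≠ 0) (ν : ℕ) : Acoeff x y ν ν = 0 := by
  have : (y / x) ^ ν ≠ 0 := by positivity
  rw [Acoeff_eq_ratio_pow, Icc_eq_empty (by omega), sum_empty]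
  field_simp
  ring

theorem Acoeff_recurrence (hx : x ≠ 0) (hy : y ≠ 0) {ν i : ℕ} (hi : i + 2 ≤ ν) :
    (1 + x ^ 2 / y ^ 2) * Acoeff x y ν (i + 1)
      = x / y * (Acoeff x y ν i + Acoeff x y ν (i + 2)) := by
  simp only [Acoeff_eq_ratio_pow]
  rw [sum_Icc_eq_add_sum_Icc_succ (a := i + 1) (by omega),
    sum_Icc_eq_add_sum_Icc_succ (a := i + 1 + 1) (by omega)]
  generalize ∑ c ∈ Icc (i + 1 + 1 + 1) ν, (y / x) ^ (2 * c) = S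
  have hr : y / x ≠ 0 := div_ne_zero hy hx
  rw [← div_pow, ← inv_div y x, inv_pow]
  generalize y / x = r at *
  simp only [mul_add, pow_add, pow_mul]
  have : r ^ i ≠ 0 := pow_ne_zero _ hr
  generalize r ^ i = t at *
  field_simp
  ring

theorem pow_succ_mul_AcoeffDiag (hx : x ≠ 0) (hy : y ≠ 0) (ν : ℕ) :
    (x / y) ^ (ν + 1) * AcoeffDiag x y ν = x * y / (1 - x ^ 2) := by
  have hinv : (x / y) ^ ν * (y / x) ^ ν = 1 := by
    rw [← mul_pow, div_mul_div_comm, mul_comm x y, div_self (mul_ne_zero hy hx), one_pow]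
  calc (x / y) ^ (ν + 1) * AcoeffDiag x y ν
      = (x / y) ^ ν * (y / x) ^ ν * (x / y * y ^ 2 / (1 - x ^ 2)) := by rw [AcoeffDiag]; ring
    _ = x * y / (1 - x ^ 2) := by rw [hinv, one_mul]; field_simp

theorem coefficient_of_U_nu_sub_one_general (x y : ℂ) (hx : x ≠ 0) (hy : y ≠ 0)
    (ν : ℕ) (hν : 2 ≤ ν) :
    (x / y) ^ ν * ((1 + x ^ 2 / y ^ 2) * Acoeff x y ν (ν - 1)
        - (x / y) * AcoeffDiag x y ν - (x / y) * Acoeff x y ν (ν - 2))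
      = -(x * y) / (1 - x ^ 2) := by
  have hrec := Acoeff_recurrence hx hy (ν := ν) (i := ν - 2) (by omega)
  rw [show ν - 2 + 1 = ν - 1 by omega, show ν - 2 + 2 = ν by omega, Acoeff_self hx hy,
    add_zero] at hrec
  rw [hrec, neg_div, ← pow_succ_mul_AcoeffDiag hx hy ν]
  ring

/-- For nonzero complex `x, y` with `x² ≠ 1` and an integer `ν ≥ 2`,
`(x/y)^ν [ (1 + x²/y²) A_{ν−1,ν} − (x/y) A_{ν,ν} − (x/y) A_{ν−2,ν} ] = −xy/(1 − x²)`. -/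
theorem coefficient_of_U_nu_sub_one (x y : ℂ) (hx : x ≠ 0) (hy : y ≠ 0)
    (hx1 : x ^ 2 ≠ 1) (ν : ℕ) (hν : 2 ≤ ν) :
    (x / y) ^ ν * ((1 + x ^ 2 / y ^ 2) * Acoeff x y ν (ν - 1)
        - (x / y) * AcoeffDiag x y ν - (x / y) * Acoeff x y ν (ν - 2))
      = -(x * y) / (1 - x ^ 2) :=
  coefficient_of_U_nu_sub_one_general x y hx hy ν hν
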